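/- arXiv:2510.21126 — 2 statements merged into one kernel-verified Lean document; each statement's English description precedes it below -/
import Mathlib

section
/- For every 3CNF system (A, a) over n ≥ 1 variables, there exists M0 > 0 such that for every real M ≥ M0: if (A, a) has a satisfying assignment then v(P(A, a, M)) = −1, and if (A, a) has no satisfying assignment then v(P(A, a, M)) = 0; in both cases the infimum is attained. -/
noncomputable section

/-- The tuple type `(z, f, s, t, u)` of five vectors in `ℝ^m`. -/
abbrev Tup (m : ℕ) : Type :=
  (Fin m → ℝ) × (Fin m → ℝ) × (Fin m → ℝ) × (Fin m → ℝ) × (Fin m → ℝ)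

def Tz {m : ℕ} (p : Tup m) : Fin m → ℝ := p.1
def Tf {m : ℕ} (p : Tup m) : Fin m → ℝ := p.2.1
def Ts {m : ℕ} (p : Tup m) : Fin m → ℝ := p.2.2.1
def Tt {m : ℕ} (p : Tup m) : Fin m → ℝ := p.2.2.2.1
def Tu {m : ℕ} (p : Tup m) : Fin m → ℝ := p.2.2.2.2

/-- The feasible set `Flex(m, θ)`. -/
def Flex (m : ℕ) (θ : ℝ) : Set (Tup m) :=
  { p | (∀ i : Fin m, i.val = m - 1 → Tu p i = θ) ∧
        (∀ i : Fin m,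
          (3 / 2) * Tu p i - 1 / 2 ≤ Ts p i ∧
          (3 / 2) * Tu p i - 1 ≤ Tt p i ∧
          Tz p i = 2 * (Ts p i - Tt p i) ∧
          -(Tf p i) ≤ Tz p i - 1 / 2 ∧ Tz p i - 1 / 2 ≤ Tf p i ∧
          0 ≤ Tz p i ∧ Tz p i ≤ 1 ∧ 0 ≤ Tf p i ∧ Tf p i ≤ 1 ∧
          0 ≤ Ts p i ∧ Ts p i ≤ 1 ∧ 0 ≤ Tt p i ∧ Tt p i ≤ 1 ∧
          0 ≤ Tu p i ∧ Tu p i ≤ 1) ∧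
        (∀ i : Fin m, 1 ≤ i.val →
          Tu p ⟨i.val - 1, Nat.lt_of_le_of_lt (Nat.sub_le _ _) i.isLt⟩ =
            3 * Tu p i - 2 * Tz p i) }

/-- The set of minimizers of `g` over `S`. -/
def argminOn {α : Type} (g : α → ℝ) (S : Set α) : Set α :=
  {x ∈ S | ∀ y ∈ S, g x ≤ g y}

/-- The lexicographic optimal set `Slex(m, θ)`: first minimize `s_m + t_m`, then
`s_{m-1} + t_{m-1}`, …, then `s_1 + t_1`, and finally `∑ f_i` over `Flex(m, θ)`. -/
def Slex (m : ℕ) (θ : ℝ) : Set (Tup m) :=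
  argminOn (fun p => ∑ i : Fin m, Tf p i)
    ((List.finRange m).reverse.foldl
      (fun S i => argminOn (fun p => Ts p i + Tt p i) S) (Flex m θ))
/-- `(A, a)` is a 3CNF system. -/
def Is3CNF {n p : ℕ} (A : Matrix (Fin p) (Fin n) ℤ) (a : Fin p → ℤ) : Prop :=
  ∃ P N : Matrix (Fin p) (Fin n) ℤ,
    (∀ j i, 0 ≤ P j i) ∧ (∀ j i, 0 ≤ N j i) ∧ A = P - N ∧
    (∀ j, a j = ∑ i, N j i) ∧ (∀ j, (∑ i, (P j i + N j i)) = 3)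

/-- `(A, a)` has a satisfying assignment. -/
def SatAssign {n p : ℕ} (A : Matrix (Fin p) (Fin n) ℤ) (a : Fin p → ℤ) : Prop :=
  ∃ μ : Fin n → ℤ, (∀ i, μ i = 0 ∨ μ i = 1) ∧ ∀ j, 1 - a j ≤ ∑ i, A j i * μ i
/-- The weighted lower-level objective
`Σ_{i=1}^m 16^i (s_i + t_i) + η Σ_{i=1}^m 4^{−(m−i)} f_i`. -/
def wObj (m : ℕ) (η : ℝ) (p : Tup m) : ℝ :=
  ∑ i : Fin m, (16 : ℝ) ^ (i.val + 1) * (Ts p i + Tt p i) +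
    η * ∑ i : Fin m, (1 / 4 : ℝ) ^ (m - 1 - i.val) * Tf p i

/-- The relaxed system `B z + e·1 ≥ b` associated with a 3CNF system `(A, a)`. -/
def BzRelax {n p : ℕ} (A : Matrix (Fin p) (Fin n) ℤ) (a : Fin p → ℤ)
    (z : Fin (n + 1) → ℝ) (e : ℝ) : Prop :=
  (∀ j, 3 / 2 - z (Fin.last n) / 2 - (a j : ℝ) - e ≤
    ∑ i : Fin n, (A j i : ℝ) * z i.castSucc) ∧
  (∀ i : Fin n, 1 / 2 - z (Fin.last n) / 2 - e ≤ z i.castSucc ∧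
    z i.castSucc ≤ 1 / 2 + z (Fin.last n) / 2 + e)

/-- The feasible set of the LP `L(θ)`: pairs `((z, f, s, t, u), e)`. -/
def FL {n p : ℕ} (A : Matrix (Fin p) (Fin n) ℤ) (a : Fin p → ℤ) (θ : ℝ) :
    Set (Tup (n + 1) × ℝ) :=
  {q | BzRelax A a (Tz q.1) q.2 ∧ 0 ≤ q.2 ∧ q.2 ≤ 1 ∧ q.1 ∈ Flex (n + 1) θ}

/-- The set of optimal solutions of the LP `L(θ)`. -/
def SL {n p : ℕ} (A : Matrix (Fin p) (Fin n) ℤ) (a : Fin p → ℤ) (θ : ℝ) :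
    Set (Tup (n + 1) × ℝ) :=
  argminOn (fun q => wObj (n + 1) 1 q.1) (FL A a θ)

/-- The feasible set of `P(A, a, M)` (independent of `M`): tuples
`(θ, ((z, f, s, t, u), e))` with `((z, f, s, t, u), e)` optimal for `L(θ)`. -/
def FP {n p : ℕ} (A : Matrix (Fin p) (Fin n) ℤ) (a : Fin p → ℤ) :
    Set (ℝ × Tup (n + 1) × ℝ) :=
  {q | q.2 ∈ SL A a q.1}

/-- The upper-level objective of `P(A, a, M)`. -/
def PObj (n : ℕ) (M : ℝ) (q : ℝ × Tup (n + 1) × ℝ) : ℝ :=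
  (2 * ∑ i : Fin n, (Tz q.2.1 (Fin.last n) - 2 * Tf q.2.1 i.castSucc) -
    (2 / (n : ℝ)) * ∑ i : Fin n, Tf q.2.1 i.castSucc) + M * q.2.2


-- ===== auxiliary definitions and lemmas =====

def sg (u : ℝ) : ℝ := max 0 ((3*u - 1)/2)
def tg (u : ℝ) : ℝ := max 0 ((3*u - 2)/2)
def gam (u : ℝ) : ℝ := 2*(sg u - tg u)
def gc (u : ℝ) : ℝ := sg u + tg u

lemma sg_nonneg (u : ℝ) : 0 ≤ sg u := le_max_left _ _
lemma tg_nonneg (u : ℝ) : 0 ≤ tg u := le_max_left _ _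
lemma sg_ge (u : ℝ) : (3*u - 1)/2 ≤ sg u := le_max_right _ _
lemma tg_ge (u : ℝ) : (3*u - 2)/2 ≤ tg u := le_max_right _ _
lemma sg_le_one {u : ℝ} (hu : u ≤ 1) : sg u ≤ 1 := by
  apply max_le <;> [norm_num; linarith]
lemma tg_le_one {u : ℝ} (hu : u ≤ 1) : tg u ≤ 1 := by
  apply max_le <;> [norm_num; linarith]
lemma tg_le_sg (u : ℝ) : tg u ≤ sg u := max_le_max le_rfl (by linarith)
lemma sg_sub_tg_le (u : ℝ) : sg u - tg u ≤ 1/2 := by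
  have h : sg u ≤ tg u + 1/2 := by
    apply max_le
    · have := tg_nonneg u; linarith
    · have := tg_ge u; linarith
  linarith
lemma gam_nonneg (u : ℝ) : 0 ≤ gam u := by
  have := tg_le_sg u; unfold gam; linarith
lemma gam_le_one (u : ℝ) : gam u ≤ 1 := by
  have := sg_sub_tg_le u; unfold gam; linarith

lemma gam_low {u : ℝ} (hu : u ≤ 1/3) : gam u = 0 := by
  unfold gam sg tg
  rw [max_eq_left (by linarith), max_eq_left (by linarith)]
  ring
lemma gam_high {u : ℝ} (hu : 2/3 ≤ u) : gam u = 1 := by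
  unfold gam sg tg
  rw [max_eq_right (by linarith), max_eq_right (by linarith)]
  ring
lemma gam_mid {u : ℝ} (h1 : 1/3 ≤ u) (h2 : u ≤ 2/3) : gam u = 3*u - 1 := by
  unfold gam sg tg
  rw [max_eq_right (by linarith), max_eq_left (by linarith)]
  ring

lemma sg_lip (u w : ℝ) : sg w - (3/2)*|u - w| ≤ sg u := by
  have h1 : (3*w - 1)/2 ≤ (3*u - 1)/2 + (3/2)*|u - w| := by
    have := neg_abs_le (u - w); nlinarith
  have h2 : sg w ≤ sg u + (3/2)*|u - w| := by
    apply max_le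
    · have := sg_nonneg u; have := abs_nonneg (u - w); linarith
    · have := sg_ge u; linarith
  linarith
lemma tg_lip (u w : ℝ) : tg w - (3/2)*|u - w| ≤ tg u := by
  have h1 : (3*w - 2)/2 ≤ (3*u - 2)/2 + (3/2)*|u - w| := by
    have := neg_abs_le (u - w); nlinarith
  have h2 : tg w ≤ tg u + (3/2)*|u - w| := by
    apply max_le
    · have := tg_nonneg u; have := abs_nonneg (u - w); linarith
    · have := tg_ge u; linarith
  linarith

/-- per-level lower bound on `s+t` relative to a reference value `w`. -/
lemma level_bound {u w z s t : ℝ} (hs : 3/2*u - 1/2 ≤ s) (hs0 : 0 ≤ s)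
    (ht : 3/2*u - 1 ≤ t) (ht0 : 0 ≤ t) (hz : z = 2*(s - t)) :
    gc w + |z - gam w|/2 - 3*|u - w| ≤ s + t := by
  have hsu : sg u ≤ s := max_le hs0 (by linarith)
  have htu : tg u ≤ t := max_le ht0 (by linarith)
  have h1 : 2*tg w + z/2 - 3*|u - w| ≤ s + t := by
    have := tg_lip u w; linarith
  have h2 : 2*sg w - z/2 - 3*|u - w| ≤ s + t := by
    have := sg_lip u w; linarith
  rcases le_total z (gam w) with h | h
  · rw [abs_of_nonpos (by linarith)]; unfold gc gam at *; linarith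
  · rw [abs_of_nonneg (by linarith)]; unfold gc gam at *; linarith

def greedy {m : ℕ} (w : Fin m → ℝ) : Tup m :=
  (fun k => gam (w k), fun k => |gam (w k) - 1/2|,
   fun k => sg (w k), fun k => tg (w k), w)

lemma greedy_mem_flex {m : ℕ} (θ : ℝ) (w : Fin m → ℝ)
    (hw0 : ∀ k, 0 ≤ w k) (hw1 : ∀ k, w k ≤ 1)
    (hwtop : ∀ k : Fin m, k.val = m - 1 → w k = θ)
    (hwrec : ∀ i : Fin m, 1 ≤ i.val →
      w ⟨i.val - 1, Nat.lt_of_le_of_lt (Nat.sub_le _ _) i.isLt⟩ =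
        3 * w i - 2 * gam (w i)) :
    greedy w ∈ Flex m θ := by
  refine ⟨fun i hi => hwtop i hi, fun i => ?_, fun i hi => hwrec i hi⟩
  have h0 := hw0 i
  have h1 := hw1 i
  have hg0 := gam_nonneg (w i)
  have hg1 := gam_le_one (w i)
  have hab : |gam (w i) - 1/2| ≤ 1/2 := abs_le.mpr ⟨by linarith, by linarith⟩
  refine ⟨?_, ?_, ?_, ?_, ?_, ?_, ?_, ?_, ?_, ?_, ?_, ?_, ?_, ?_, ?_⟩
  · show 3/2 * w i - 1/2 ≤ sg (w i); have := sg_ge (w i); linarith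
  · show 3/2 * w i - 1 ≤ tg (w i); have := tg_ge (w i); linarith
  · show gam (w i) = 2 * (sg (w i) - tg (w i)); rfl
  · show -|gam (w i) - 1/2| ≤ gam (w i) - 1/2; exact neg_abs_le _
  · show gam (w i) - 1/2 ≤ |gam (w i) - 1/2|; exact le_abs_self _
  · exact hg0
  · exact hg1
  · exact abs_nonneg _
  · exact le_trans hab (by norm_num)
  · exact sg_nonneg _
  · exact sg_le_one h1
  · exact tg_nonneg _
  · exact tg_le_one h1
  · exact h0
  · exact h1

lemma abs_half_sub (x y : ℝ) : |x - 1/2| - |y - x| ≤ |y - 1/2| := by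
  have h2 := abs_sub_abs_le_abs_sub (x - 1/2) (y - 1/2)
  have h3 : |x - 1/2 - (y - 1/2)| = |y - x| := by rw [← abs_neg]; ring_nf
  rw [h3] at h2; linarith

lemma greedy_opt {m : ℕ} (θ : ℝ) (w : Fin m → ℝ)
    (hwtop : ∀ k : Fin m, k.val = m - 1 → w k = θ)
    (hwrec : ∀ i : Fin m, 1 ≤ i.val →
      w ⟨i.val - 1, Nat.lt_of_le_of_lt (Nat.sub_le _ _) i.isLt⟩ =
        3 * w i - 2 * gam (w i))
    (q : Tup m) (hq : q ∈ Flex m θ) :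
    wObj m 1 (greedy w) ≤ wObj m 1 q := by
  obtain ⟨htop, hlev, hrec⟩ := hq
  set cG : ℕ → ℝ := fun j => if h : j < m then
      (16 : ℝ) ^ (j + 1) * (sg (w ⟨j, h⟩) + tg (w ⟨j, h⟩)) +
        (1/4 : ℝ) ^ (m - 1 - j) * |gam (w ⟨j, h⟩) - 1/2| else 0 with hcG
  set cP : ℕ → ℝ := fun j => if h : j < m then
      (16 : ℝ) ^ (j + 1) * (Ts q ⟨j, h⟩ + Tt q ⟨j, h⟩) +
        (1/4 : ℝ) ^ (m - 1 - j) * Tf q ⟨j, h⟩ else 0 with hcP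
  have ecG : ∀ (j : ℕ) (h : j < m), cG j =
      (16 : ℝ) ^ (j + 1) * (sg (w ⟨j, h⟩) + tg (w ⟨j, h⟩)) +
        (1/4 : ℝ) ^ (m - 1 - j) * |gam (w ⟨j, h⟩) - 1/2| := by
    intro j h; rw [hcG]; exact dif_pos h
  have ecP : ∀ (j : ℕ) (h : j < m), cP j =
      (16 : ℝ) ^ (j + 1) * (Ts q ⟨j, h⟩ + Tt q ⟨j, h⟩) +
        (1/4 : ℝ) ^ (m - 1 - j) * Tf q ⟨j, h⟩ := by
    intro j h; rw [hcP]; exact dif_pos h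
  have key : ∀ K, (hK : K < m) →
      ∑ j ∈ Finset.range (K+1), cG j ≤ ∑ j ∈ Finset.range (K+1), cP j +
        (15/4) * 16 ^ (K+1) * |Tu q ⟨K, hK⟩ - w ⟨K, hK⟩| := by
    intro K
    induction K with
    | zero =>
      intro hK
      rw [Finset.sum_range_one, Finset.sum_range_one, ecG 0 hK, ecP 0 hK]
      obtain ⟨hs, ht, hz, hf1, hf2, hz0, hz1, hf0, hfub, hs0, hs1, ht0, ht1, hu0, hu1⟩ :=
        hlev ⟨0, hK⟩
      have hst := level_bound (w := w ⟨0, hK⟩) hs hs0 ht ht0 hz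
      set F := ((1:ℝ)/4) ^ (m - 1 - 0) with hF
      set Δ := |Tz q ⟨0, hK⟩ - gam (w ⟨0, hK⟩)| with hΔd
      have hzf : |Tz q ⟨0, hK⟩ - 1/2| ≤ Tf q ⟨0, hK⟩ := abs_le.mpr ⟨by linarith, by linarith⟩
      have hff : |gam (w ⟨0, hK⟩) - 1/2| - Δ ≤ Tf q ⟨0, hK⟩ :=
        le_trans (abs_half_sub _ _) hzf
      have hF1 : F ≤ 1 := by rw [hF]; apply pow_le_one₀ <;> norm_num
      have hF0 : (0:ℝ) ≤ F := by rw [hF]; positivity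
      have hΔ0 : (0:ℝ) ≤ Δ := abs_nonneg _
      have habsd : (0:ℝ) ≤ |Tu q ⟨0, hK⟩ - w ⟨0, hK⟩| := abs_nonneg _
      have e16 : (16:ℝ)^(0+1) = 16 := by norm_num
      rw [e16]
      have hint1 : F * |gam (w ⟨0, hK⟩) - 1/2| ≤ F * Tf q ⟨0, hK⟩ + F * Δ := by
        have := mul_le_mul_of_nonneg_left hff hF0
        rw [mul_sub] at this; linarith
      have hint2 : F * Δ ≤ Δ := by
        have := mul_le_mul_of_nonneg_right hF1 hΔ0
        rw [one_mul] at this; linarith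
      unfold gc at hst
      linarith
    | succ K ih =>
      intro hK1
      have hK : K < m := Nat.lt_of_succ_lt hK1
      have ihK := ih hK
      rw [Finset.sum_range_succ, Finset.sum_range_succ (f := cP), ecG _ hK1, ecP _ hK1]
      obtain ⟨hs, ht, hz, hf1, hf2, hz0, hz1, hf0, hfub, hs0, hs1, ht0, ht1, hu0, hu1⟩ :=
        hlev ⟨K+1, hK1⟩
      have hst := level_bound (w := w ⟨K+1, hK1⟩) hs hs0 ht ht0 hz
      set F := ((1:ℝ)/4) ^ (m - 1 - (K+1)) with hF
      set Δ := |Tz q ⟨K+1, hK1⟩ - gam (w ⟨K+1, hK1⟩)| with hΔd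
      set d' := |Tu q ⟨K+1, hK1⟩ - w ⟨K+1, hK1⟩| with hd'
      set X := (16:ℝ)^(K+1) with hX
      have hX16 : (16:ℝ) ≤ X := by
        rw [hX]; calc (16:ℝ) = 16^1 := by norm_num
        _ ≤ 16^(K+1) := pow_le_pow_right₀ (by norm_num) (by omega)
      have hXpos : (0:ℝ) < X := by rw [hX]; positivity
      have hrq := hrec ⟨K+1, hK1⟩ (by simp)
      have hrw := hwrec ⟨K+1, hK1⟩ (by simp)
      have hmk : (⟨(K+1) - 1, Nat.lt_of_le_of_lt (Nat.sub_le _ _) hK1⟩ : Fin m) = ⟨K, hK⟩ := by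
        simp
      rw [hmk] at hrq hrw
      have hdK : |Tu q ⟨K, hK⟩ - w ⟨K, hK⟩| ≤ 3 * d' + 2 * Δ := by
        rw [hrq, hrw]
        have h1 : 3 * Tu q ⟨K+1, hK1⟩ - 2 * Tz q ⟨K+1, hK1⟩ -
            (3 * w ⟨K+1, hK1⟩ - 2 * gam (w ⟨K+1, hK1⟩)) =
            3 * (Tu q ⟨K+1, hK1⟩ - w ⟨K+1, hK1⟩) -
              2 * (Tz q ⟨K+1, hK1⟩ - gam (w ⟨K+1, hK1⟩)) := by ring
        rw [h1]
        have h2 := abs_sub (3 * (Tu q ⟨K+1, hK1⟩ - w ⟨K+1, hK1⟩))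
          (2 * (Tz q ⟨K+1, hK1⟩ - gam (w ⟨K+1, hK1⟩)))
        rw [abs_mul, abs_mul] at h2
        rw [hd', hΔd]
        calc _ ≤ _ := h2
        _ = 3 * |Tu q ⟨K+1, hK1⟩ - w ⟨K+1, hK1⟩| + 2 * |Tz q ⟨K+1, hK1⟩ - gam (w ⟨K+1, hK1⟩)| := by
            norm_num
      have hzf : |Tz q ⟨K+1, hK1⟩ - 1/2| ≤ Tf q ⟨K+1, hK1⟩ := abs_le.mpr ⟨by linarith, by linarith⟩
      have hff : |gam (w ⟨K+1, hK1⟩) - 1/2| - Δ ≤ Tf q ⟨K+1, hK1⟩ :=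
        le_trans (abs_half_sub _ _) hzf
      have hF1 : F ≤ 1 := by rw [hF]; apply pow_le_one₀ <;> norm_num
      have hF0 : (0:ℝ) ≤ F := by rw [hF]; positivity
      have hΔ0 : (0:ℝ) ≤ Δ := abs_nonneg _
      have hd0 : (0:ℝ) ≤ d' := abs_nonneg _
      have e16 : (16:ℝ)^(K+1+1) = 16 * X := by rw [hX]; ring
      rw [e16]
      have hint1 : F * |gam (w ⟨K+1, hK1⟩) - 1/2| ≤ F * Tf q ⟨K+1, hK1⟩ + F * Δ := by
        have := mul_le_mul_of_nonneg_left hff hF0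
        rw [mul_sub] at this; linarith
      have hint2 : F * Δ ≤ Δ := by
        have := mul_le_mul_of_nonneg_right hF1 hΔ0
        rw [one_mul] at this; linarith
      have hint3 : 2 * Δ ≤ X * Δ := by
        have := mul_le_mul_of_nonneg_right hX16 hΔ0; linarith
      have hint4 : (15/4) * X * |Tu q ⟨K, hK⟩ - w ⟨K, hK⟩| ≤ (15/4) * X * (3 * d' + 2 * Δ) :=
        mul_le_mul_of_nonneg_left hdK (by positivity)
      unfold gc at hst
      have hint5 : X * (sg (w ⟨K+1, hK1⟩) + tg (w ⟨K+1, hK1⟩) + Δ/2 - 3*d') ≤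
          X * (Ts q ⟨K+1, hK1⟩ + Tt q ⟨K+1, hK1⟩) :=
        mul_le_mul_of_nonneg_left hst (le_of_lt hXpos)
      have hXd : (0:ℝ) ≤ X * d' := by positivity
      linarith [hint1, hint2, hint3, hint4, hint5, ihK, hXd]
  -- conclude
  have ewG : wObj m 1 (greedy w) = ∑ j ∈ Finset.range m, cG j := by
    rw [← Fin.sum_univ_eq_sum_range]
    rw [wObj, one_mul, ← Finset.sum_add_distrib]
    refine Finset.sum_congr rfl fun i _ => ?_
    rw [ecG i.val i.isLt]
    simp [greedy, Ts, Tt, Tf, Fin.eta]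
  have ewP : wObj m 1 q = ∑ j ∈ Finset.range m, cP j := by
    rw [← Fin.sum_univ_eq_sum_range]
    rw [wObj, one_mul, ← Finset.sum_add_distrib]
    refine Finset.sum_congr rfl fun i _ => ?_
    rw [ecP i.val i.isLt]
  rcases Nat.eq_zero_or_pos m with hm | hm
  · subst hm; rw [ewG, ewP]; simp
  · obtain ⟨M, rfl⟩ : ∃ M, m = M + 1 := ⟨m - 1, by omega⟩
    have hKm : M < M + 1 := Nat.lt_succ_self M
    have hd0 : Tu q ⟨M, hKm⟩ - w ⟨M, hKm⟩ = 0 := by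
      rw [htop ⟨M, hKm⟩ (by simp), hwtop ⟨M, hKm⟩ (by simp)]; ring
    have := key M hKm
    rw [hd0] at this
    simp only [abs_zero, mul_zero, add_zero] at this
    rw [ewG, ewP]
    exact this

lemma opt_f_eq {n p : ℕ} {A : Matrix (Fin p) (Fin n) ℤ} {a : Fin p → ℤ} {θ : ℝ}
    {q : Tup (n+1) × ℝ} (hq : q ∈ SL A a θ) (k : Fin (n+1)) :
    Tf q.1 k = |Tz q.1 k - 1/2| := by
  obtain ⟨⟨hB, he0, he1, htop, hlev, hrec⟩, hopt⟩ := hq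
  set q' : Tup (n+1) × ℝ :=
    ((Tz q.1, fun j => |Tz q.1 j - 1/2|, Ts q.1, Tt q.1, Tu q.1), q.2) with hq'
  have hq'mem : q' ∈ FL A a θ := by
    refine ⟨hB, he0, he1, htop, fun i => ?_, hrec⟩
    obtain ⟨hs, ht, hz, _, _, hz0, hz1, _, _, hs0, hs1, ht0, ht1, hu0, hu1⟩ := hlev i
    have h12 : |Tz q.1 i - 1/2| ≤ 1/2 := abs_le.mpr ⟨by linarith, by linarith⟩
    exact ⟨hs, ht, hz, neg_abs_le _, le_abs_self _, hz0, hz1, abs_nonneg _,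
      by show |Tz q.1 i - 1/2| ≤ 1; linarith, hs0, hs1, ht0, ht1, hu0, hu1⟩
  have hle : wObj (n+1) 1 q.1 ≤ wObj (n+1) 1 q'.1 := hopt q' hq'mem
  rw [hq'] at hle
  have hsum : ∑ i : Fin (n+1), (1/4:ℝ) ^ (n + 1 - 1 - i.val) * Tf q.1 i ≤
      ∑ i : Fin (n+1), (1/4:ℝ) ^ (n + 1 - 1 - i.val) * |Tz q.1 i - 1/2| := by
    have e1 : wObj (n+1) 1 q.1 = ∑ i : Fin (n+1), (16:ℝ)^(i.val+1) * (Ts q.1 i + Tt q.1 i) +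
        ∑ i : Fin (n+1), (1/4:ℝ) ^ (n + 1 - 1 - i.val) * Tf q.1 i := by
      rw [wObj, one_mul]
    have e2 : wObj (n+1) 1 ((Tz q.1, fun j => |Tz q.1 j - 1/2|, Ts q.1, Tt q.1, Tu q.1) : Tup (n+1)) = ∑ i : Fin (n+1), (16:ℝ)^(i.val+1) * (Ts q.1 i + Tt q.1 i) +
        ∑ i : Fin (n+1), (1/4:ℝ) ^ (n + 1 - 1 - i.val) * |Tz q.1 i - 1/2| := by
      rw [wObj, one_mul]; rfl
    rw [e1, e2] at hle
    linarith
  have hterm : ∀ i : Fin (n+1),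
      0 ≤ (1/4:ℝ) ^ (n + 1 - 1 - i.val) * (Tf q.1 i - |Tz q.1 i - 1/2|) := by
    intro i
    obtain ⟨_, _, _, hl1, hl2, _, _, _, _, _, _, _, _, _, _⟩ := hlev i
    have : |Tz q.1 i - 1/2| ≤ Tf q.1 i := abs_le.mpr ⟨by linarith, by linarith⟩
    have hF0 : (0:ℝ) ≤ (1/4:ℝ) ^ (n + 1 - 1 - i.val) := by positivity
    nlinarith
  have hzero : ∑ i : Fin (n+1), (1/4:ℝ) ^ (n + 1 - 1 - i.val) *
      (Tf q.1 i - |Tz q.1 i - 1/2|) = 0 := by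
    apply le_antisymm
    · have hexp : ∑ i : Fin (n+1), (1/4:ℝ) ^ (n + 1 - 1 - i.val) *
          (Tf q.1 i - |Tz q.1 i - 1/2|) =
          (∑ i : Fin (n+1), (1/4:ℝ) ^ (n + 1 - 1 - i.val) * Tf q.1 i) -
            ∑ i : Fin (n+1), (1/4:ℝ) ^ (n + 1 - 1 - i.val) * |Tz q.1 i - 1/2| := by
        rw [← Finset.sum_sub_distrib]
        exact Finset.sum_congr rfl fun i _ => mul_sub _ _ _
      rw [hexp]; linarith
    · exact Finset.sum_nonneg fun i _ => hterm i
  have := (Finset.sum_eq_zero_iff_of_nonneg (fun i _ => hterm i)).mp hzero k (Finset.mem_univ k)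
  have hF : (0:ℝ) < (1/4:ℝ) ^ (n + 1 - 1 - k.val) := by positivity
  have := mul_eq_zero.mp this
  rcases this with h | h
  · exact absurd h (ne_of_gt hF)
  · linarith [sub_eq_zero.mp h]

lemma pobj_expand {n : ℕ} (hn : 1 ≤ n) (M : ℝ) (r : ℝ × Tup (n+1) × ℝ) :
    PObj n M r = 2 * ((n:ℝ) * Tz r.2.1 (Fin.last n) -
      2 * ∑ i : Fin n, Tf r.2.1 i.castSucc) -
      (2 / (n:ℝ)) * ∑ i : Fin n, Tf r.2.1 i.castSucc + M * r.2.2 := by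
  rw [PObj]
  have h1 : ∑ i : Fin n, (Tz r.2.1 (Fin.last n) - 2 * Tf r.2.1 i.castSucc) =
      (n:ℝ) * Tz r.2.1 (Fin.last n) - 2 * ∑ i : Fin n, Tf r.2.1 i.castSucc := by
    rw [Finset.sum_sub_distrib, Finset.sum_const, Finset.card_univ, Fintype.card_fin,
      nsmul_eq_mul, ← Finset.mul_sum]
  rw [h1]

lemma lb_sat {n p : ℕ} (hn : 1 ≤ n) {A : Matrix (Fin p) (Fin n) ℤ} {a : Fin p → ℤ}
    (M : ℝ) (hM : 4 * n + 2 ≤ M) (r : ℝ × Tup (n+1) × ℝ) (hr : r ∈ FP A a) :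
    -1 ≤ PObj n M r := by
  have hSL := hr
  have hfeq := fun k => opt_f_eq hSL k
  obtain ⟨⟨hB, he0, he1, htop, hlev, hrec⟩, hopt⟩ := hSL
  set z : Fin (n+1) → ℝ := Tz r.2.1 with hzdef
  set e : ℝ := r.2.2 with hedef
  set zm : ℝ := z (Fin.last n) with hzm
  obtain ⟨_, _, _, _, _, hzm0, hzm1, _, _, _, _, _, _, _, _⟩ := hlev (Fin.last n)
  have hbox : ∀ i : Fin n, Tf r.2.1 i.castSucc ≤ zm / 2 + e := by
    intro i
    obtain ⟨hb1, hb2⟩ := hB.2 i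
    rw [hfeq i.castSucc]
    exact abs_le.mpr ⟨by linarith, by linarith⟩
  have hf0 : ∀ i : Fin n, 0 ≤ Tf r.2.1 i.castSucc := by
    intro i; obtain ⟨_, _, _, _, _, _, _, h, _⟩ := hlev i.castSucc; exact h
  set S : ℝ := ∑ i : Fin n, Tf r.2.1 i.castSucc with hSdef
  have hS0 : 0 ≤ S := Finset.sum_nonneg fun i _ => hf0 i
  have hS1 : S ≤ (n:ℝ) * (zm / 2 + e) := by
    calc S ≤ ∑ _i : Fin n, (zm / 2 + e) := Finset.sum_le_sum fun i _ => hbox i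
    _ = (n:ℝ) * (zm / 2 + e) := by
        rw [Finset.sum_const, Finset.card_univ, Fintype.card_fin, nsmul_eq_mul]
  have hnpos : (0:ℝ) < n := by exact_mod_cast hn
  have h2n : (2 / (n:ℝ)) * S ≤ zm + 2 * e := by
    have := mul_le_mul_of_nonneg_left hS1 (by positivity : (0:ℝ) ≤ 2 / n)
    calc (2 / (n:ℝ)) * S ≤ (2 / (n:ℝ)) * ((n:ℝ) * (zm / 2 + e)) := this
    _ = zm + 2 * e := by field_simp
  have hMe : (4 * (n:ℝ) + 2) * e ≤ M * e := mul_le_mul_of_nonneg_right hM he0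
  rw [pobj_expand hn M r, ← hSdef, ← hzdef, ← hzm, ← hedef]
  have hn1 : (1:ℝ) ≤ n := by exact_mod_cast hn
  nlinarith [hS1, h2n, hMe, hzm1, he0, hS0]

lemma lb_unsat {n p : ℕ} (hn : 1 ≤ n) {A : Matrix (Fin p) (Fin n) ℤ} {a : Fin p → ℤ}
    (h3 : Is3CNF A a) (hns : ¬SatAssign A a)
    (M : ℝ) (hM : 4 * n + 2 ≤ M) (r : ℝ × Tup (n+1) × ℝ) (hr : r ∈ FP A a) :
    0 ≤ PObj n M r := by
  have hSL := hr
  have hfeq := fun k => opt_f_eq hSL k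
  obtain ⟨⟨hB, he0, he1, htop, hlev, hrec⟩, hopt⟩ := hSL
  set z : Fin (n+1) → ℝ := Tz r.2.1 with hzdef
  set e : ℝ := r.2.2 with hedef
  set zm : ℝ := z (Fin.last n) with hzm
  obtain ⟨_, _, _, _, _, hzm0, hzm1, _, _, _, _, _, _, _, _⟩ := hlev (Fin.last n)
  have hbox : ∀ i : Fin n, Tf r.2.1 i.castSucc ≤ zm / 2 + e := by
    intro i
    obtain ⟨hb1, hb2⟩ := hB.2 i
    rw [hfeq i.castSucc]
    exact abs_le.mpr ⟨by linarith, by linarith⟩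
  have hf0 : ∀ i : Fin n, 0 ≤ Tf r.2.1 i.castSucc := by
    intro i; obtain ⟨_, _, _, _, _, _, _, h, _⟩ := hlev i.castSucc; exact h
  set S : ℝ := ∑ i : Fin n, Tf r.2.1 i.castSucc with hSdef
  have hS0 : 0 ≤ S := Finset.sum_nonneg fun i _ => hf0 i
  have hS1 : S ≤ (n:ℝ) * (zm / 2 + e) := by
    calc S ≤ ∑ _i : Fin n, (zm / 2 + e) := Finset.sum_le_sum fun i _ => hbox i
    _ = (n:ℝ) * (zm / 2 + e) := by
        rw [Finset.sum_const, Finset.card_univ, Fintype.card_fin, nsmul_eq_mul]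
  have hnpos : (0:ℝ) < n := by exact_mod_cast hn
  have h2n : (2 / (n:ℝ)) * S ≤ zm + 2 * e := by
    have := mul_le_mul_of_nonneg_left hS1 (by positivity : (0:ℝ) ≤ 2 / n)
    calc (2 / (n:ℝ)) * S ≤ (2 / (n:ℝ)) * ((n:ℝ) * (zm / 2 + e)) := this
    _ = zm + 2 * e := by field_simp
  have hMe : (4 * (n:ℝ) + 2) * e ≤ M * e := mul_le_mul_of_nonneg_right hM he0
  -- the unsat refinement
  obtain ⟨P, N, hP0, hN0, hA, haj, h3sum⟩ := h3
  set μ : Fin n → ℤ := fun i => if 1/2 ≤ z i.castSucc then 1 else 0 with hμdef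
  have hμ01 : ∀ i, μ i = 0 ∨ μ i = 1 := by
    intro i
    by_cases h : (1:ℝ)/2 ≤ z i.castSucc
    · right; simp only [hμdef]; rw [if_pos h]
    · left; simp only [hμdef]; rw [if_neg h]
  have hcl : ∃ j, ∑ i, A j i * μ i < 1 - a j := by
    by_contra h
    push_neg at h
    exact hns ⟨μ, hμ01, fun j => h j⟩
  obtain ⟨j, hj⟩ := hcl
  have hj' : ∑ i, A j i * μ i + a j ≤ 0 := by omega
  -- integral literal values all zero
  have hid : ∑ i, (P j i * μ i + N j i * (1 - μ i)) = ∑ i, A j i * μ i + a j := by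
    rw [haj j, ← Finset.sum_add_distrib]
    refine Finset.sum_congr rfl fun i _ => ?_
    rw [hA]; simp [Matrix.sub_apply]; ring
  have hterm0 : ∀ i : Fin n, P j i * μ i = 0 ∧ N j i * (1 - μ i) = 0 := by
    have hnn : ∀ i ∈ Finset.univ, 0 ≤ P j i * μ i + N j i * (1 - μ i) := by
      intro i _
      have hP := hP0 j i; have hN := hN0 j i
      rcases hμ01 i with h | h <;> rw [h] <;> simp <;> omega
    have hzero : ∑ i, (P j i * μ i + N j i * (1 - μ i)) = 0 := by
      have hle := hid ▸ hj'
      have hge := Finset.sum_nonneg hnn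
      omega
    intro i
    have hti := (Finset.sum_eq_zero_iff_of_nonneg hnn).mp hzero i (Finset.mem_univ i)
    rcases hμ01 i with h | h
    · rw [h] at hti ⊢
      simp only [mul_zero, zero_add, mul_one, sub_zero] at hti ⊢
      exact ⟨trivial, hti⟩
    · rw [h] at hti ⊢
      simp only [mul_one, sub_self, mul_zero, add_zero] at hti ⊢
      exact ⟨hti, trivial⟩
  -- real identity for the failing clause
  set c : Fin n → ℝ := fun i => ((P j i : ℝ) + (N j i : ℝ)) with hcdef
  set d : Fin n → ℝ := fun i => |z i.castSucc - 1/2| with hddef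
  have hreal : ∀ i : Fin n, (P j i : ℝ) * z i.castSucc + (N j i : ℝ) * (1 - z i.castSucc)
      = c i / 2 - c i * d i := by
    intro i
    show (P j i : ℝ) * z i.castSucc + (N j i : ℝ) * (1 - z i.castSucc) =
      ((P j i : ℝ) + (N j i : ℝ))/2 - ((P j i : ℝ) + (N j i : ℝ)) * |z i.castSucc - 1/2|
    by_cases hcase : (1:ℝ)/2 ≤ z i.castSucc
    · have hμ1 : μ i = 1 := by simp only [hμdef]; rw [if_pos hcase]
      have hP : P j i = 0 := by have := (hterm0 i).1; rw [hμ1] at this; omega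
      rw [hP, abs_of_nonneg (by linarith)]
      push_cast
      ring
    · have hμ0 : μ i = 0 := by simp only [hμdef]; rw [if_neg hcase]
      have hN : N j i = 0 := by have := (hterm0 i).2; rw [hμ0] at this; omega
      rw [hN, abs_of_neg (by linarith)]
      push_cast
      ring
  have hAz : ∑ i, (A j i : ℝ) * z i.castSucc + (a j : ℝ) = 3/2 - ∑ i, c i * d i := by
    have e1 : ∑ i, (A j i : ℝ) * z i.castSucc + (a j : ℝ)
        = ∑ i, ((P j i : ℝ) * z i.castSucc + (N j i : ℝ) * (1 - z i.castSucc)) := by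
      have haj' : (a j : ℝ) = ∑ i, (N j i : ℝ) := by exact_mod_cast haj j
      rw [haj', ← Finset.sum_add_distrib]
      refine Finset.sum_congr rfl fun i _ => ?_
      rw [hA]; simp [Matrix.sub_apply]; push_cast; ring
    have e2 : ∑ i, ((P j i : ℝ) * z i.castSucc + (N j i : ℝ) * (1 - z i.castSucc))
        = ∑ i, (c i / 2 - c i * d i) := Finset.sum_congr rfl fun i _ => hreal i
    have e3 : ∑ i, (c i / 2 - c i * d i) = 3/2 - ∑ i, c i * d i := by
      rw [Finset.sum_sub_distrib]
      have : ∑ i, c i / 2 = 3/2 := by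
        have hc3 : ∑ i : Fin n, ((P j i : ℝ) + (N j i : ℝ)) = 3 := by
          exact_mod_cast h3sum j
        rw [hcdef, ← Finset.sum_div, hc3]
      rw [this]
    rw [e1, e2, e3]
  have hcd : ∑ i, c i * d i ≤ zm / 2 + e := by
    have hB1 := hB.1 j
    linarith [hB1, hAz]
  have hc0 : ∀ i, 0 ≤ c i := by
    intro i
    show (0:ℝ) ≤ (P j i : ℝ) + (N j i : ℝ)
    have h1 := hP0 j i; have h2 := hN0 j i
    have : (0:ℝ) ≤ (P j i : ℝ) := by exact_mod_cast h1
    have : (0:ℝ) ≤ (N j i : ℝ) := by exact_mod_cast h2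
    linarith
  have hc3 : ∀ i, c i ≤ 3 := by
    intro i
    have hle : P j i + N j i ≤ 3 := by
      have h := Finset.single_le_sum (f := fun k => P j k + N j k)
        (fun k _ => by show 0 ≤ P j k + N j k; have := hP0 j k; have := hN0 j k; omega)
        (Finset.mem_univ i)
      rw [h3sum j] at h
      exact h
    show (P j i : ℝ) + (N j i : ℝ) ≤ 3
    exact_mod_cast hle
  have hd0 : ∀ i, 0 ≤ d i := fun i => abs_nonneg _
  have hdD : ∀ i, d i ≤ zm / 2 + e := by
    intro i
    obtain ⟨hb1, hb2⟩ := hB.2 i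
    show |z i.castSucc - 1/2| ≤ zm / 2 + e
    exact abs_le.mpr ⟨by linarith, by linarith⟩
  have hfd : ∀ i : Fin n, Tf r.2.1 i.castSucc = d i := fun i => hfeq i.castSucc
  have hSd : S = ∑ i, d i := Finset.sum_congr rfl fun i _ => hfd i
  -- ∑ (3 - c i) * d i ≤ (3n - 3) * D
  have h3S : 3 * S ≤ (3 * (n:ℝ) - 2) * (zm / 2 + e) := by
    have hsum1 : ∑ i, (3 - c i) * d i ≤ ∑ i, (3 - c i) * (zm / 2 + e) :=
      Finset.sum_le_sum fun i _ =>
        mul_le_mul_of_nonneg_left (hdD i) (by linarith [hc3 i])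
    have hsum2 : ∑ i, (3 - c i) * (zm / 2 + e) = (3 * (n:ℝ) - 3) * (zm / 2 + e) := by
      rw [← Finset.sum_mul]
      congr 1
      rw [Finset.sum_sub_distrib, Finset.sum_const, Finset.card_univ, Fintype.card_fin,
        nsmul_eq_mul]
      have hc3' : ∑ i : Fin n, ((P j i : ℝ) + (N j i : ℝ)) = 3 := by
        exact_mod_cast h3sum j
      rw [hcdef, hc3']; ring
    have hexp : ∑ i, (3 - c i) * d i = 3 * S - ∑ i, c i * d i := by
      rw [hSd, Finset.mul_sum, ← Finset.sum_sub_distrib]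
      exact Finset.sum_congr rfl fun i _ => by ring
    rw [hexp] at hsum1
    rw [hsum2] at hsum1
    linarith
  rw [pobj_expand hn M r, ← hSdef, ← hzdef, ← hzm, ← hedef]
  nlinarith [h3S, h2n, hMe, hzm0, he0, hS1]

lemma Tz_greedy {m : ℕ} (w : Fin m → ℝ) (k : Fin m) : Tz (greedy w) k = gam (w k) := rfl
lemma Tf_greedy {m : ℕ} (w : Fin m → ℝ) (k : Fin m) :
    Tf (greedy w) k = |gam (w k) - 1/2| := rfl

lemma sum_A_eq {n p : ℕ} {A : Matrix (Fin p) (Fin n) ℤ} {a : Fin p → ℤ}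
    (h3 : Is3CNF A a) (j : Fin p) : ∑ i, A j i = 3 - 2 * a j := by
  obtain ⟨P, N, hP0, hN0, hA, haj, h3sum⟩ := h3
  have h1 : ∑ i, (P j i - N j i) = ∑ i, P j i - ∑ i, N j i := Finset.sum_sub_distrib _ _
  have h2 : ∑ i, (P j i + N j i) = ∑ i, P j i + ∑ i, N j i := Finset.sum_add_distrib
  have h3' := h3sum j
  have ha := haj j
  have hAe : ∑ i, A j i = ∑ i, (P j i - N j i) := by
    refine Finset.sum_congr rfl fun i _ => ?_
    rw [hA]; simp [Matrix.sub_apply]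
  rw [hAe, h1]
  omega

/-- the unsat witness point: θ = 1/6. -/
lemma unsat_point {n p : ℕ} (hn : 1 ≤ n) {A : Matrix (Fin p) (Fin n) ℤ} {a : Fin p → ℤ}
    (h3 : Is3CNF A a) (M : ℝ) :
    ∃ r ∈ FP A a, PObj n M r = 0 := by
  set w0 : Fin (n+1) → ℝ := fun k => if (k:ℕ) = n then (1/6:ℝ) else 1/2 with hw0def
  have hg12 : gam (1/2 : ℝ) = 1/2 := by rw [gam_mid (by norm_num) (by norm_num)]; norm_num
  have hg16 : gam (1/6 : ℝ) = 0 := gam_low (by norm_num)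
  have hw0v : ∀ k : Fin (n+1), w0 k = 1/6 ∨ w0 k = 1/2 := by
    intro k; by_cases h : (k:ℕ) = n
    · left; simp only [hw0def]; rw [if_pos h]
    · right; simp only [hw0def]; rw [if_neg h]
  have hw00 : ∀ k, 0 ≤ w0 k := by intro k; rcases hw0v k with h | h <;> rw [h] <;> norm_num
  have hw01 : ∀ k, w0 k ≤ 1 := by intro k; rcases hw0v k with h | h <;> rw [h] <;> norm_num
  have hwtop : ∀ k : Fin (n+1), (k:ℕ) = n + 1 - 1 → w0 k = 1/6 := by
    intro k hk
    simp only [hw0def]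
    rw [if_pos (by omega)]
  have hwrec : ∀ i : Fin (n+1), 1 ≤ (i:ℕ) →
      w0 ⟨(i:ℕ) - 1, Nat.lt_of_le_of_lt (Nat.sub_le _ _) i.isLt⟩ =
        3 * w0 i - 2 * gam (w0 i) := by
    intro i hi
    have hne : (i:ℕ) - 1 ≠ n := by have := i.isLt; omega
    have hl : w0 ⟨(i:ℕ) - 1, Nat.lt_of_le_of_lt (Nat.sub_le _ _) i.isLt⟩ = 1/2 := by
      simp only [hw0def]; rw [if_neg hne]
    rw [hl]
    by_cases h : (i:ℕ) = n
    · have : w0 i = 1/6 := by simp only [hw0def]; rw [if_pos h]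
      rw [this, hg16]; norm_num
    · have : w0 i = 1/2 := by simp only [hw0def]; rw [if_neg h]
      rw [this, hg12]; norm_num
  have hflex : greedy w0 ∈ Flex (n+1) (1/6) := greedy_mem_flex _ _ hw00 hw01 hwtop hwrec
  have hzlast : Tz (greedy w0) (Fin.last n) = 0 := by
    rw [Tz_greedy]
    have : w0 (Fin.last n) = 1/6 := by simp only [hw0def]; rw [if_pos (Fin.val_last n)]
    rw [this, hg16]
  have hzcs : ∀ i : Fin n, Tz (greedy w0) i.castSucc = 1/2 := by
    intro i
    rw [Tz_greedy]
    have : w0 i.castSucc = 1/2 := by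
      simp only [hw0def]
      rw [if_neg (by rw [Fin.coe_castSucc]; exact Nat.ne_of_lt i.isLt)]
    rw [this, hg12]
  have hfcs : ∀ i : Fin n, Tf (greedy w0) i.castSucc = 0 := by
    intro i
    rw [Tf_greedy]
    have : w0 i.castSucc = 1/2 := by
      simp only [hw0def]
      rw [if_neg (by rw [Fin.coe_castSucc]; exact Nat.ne_of_lt i.isLt)]
    rw [this, hg12]; norm_num
  have hFL : ((greedy w0, 0) : Tup (n+1) × ℝ) ∈ FL A a (1/6) := by
    refine ⟨⟨fun j => ?_, fun i => ?_⟩, le_refl 0, zero_le_one, hflex⟩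
    · have hsum : ∑ i, (A j i : ℝ) * Tz (greedy w0) i.castSucc
          = (∑ i, (A j i : ℝ)) * (1/2) := by
        rw [Finset.sum_mul]
        exact Finset.sum_congr rfl fun i _ => by rw [hzcs i]
      have hcast : (∑ i, (A j i : ℝ)) = 3 - 2 * (a j : ℝ) := by
        have := sum_A_eq h3 j
        exact_mod_cast this
      rw [hsum, hcast, hzlast]
      linarith
    · rw [hzcs i, hzlast]
      norm_num
  refine ⟨((1/6 : ℝ), (greedy w0, 0)), ?_, ?_⟩
  · exact ⟨hFL, fun y hy => greedy_opt _ _ hwtop hwrec y.1 hy.2.2.2⟩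
  · rw [pobj_expand hn M _]
    simp only
    rw [hzlast]
    have hS : ∑ i : Fin n, Tf (greedy w0) i.castSucc = 0 :=
      Finset.sum_eq_zero fun i _ => hfcs i
    rw [hS]
    ring

def vseq (f : ℕ → ℝ) : ℕ → ℝ := fun j => Nat.rec 0 (fun k vk => (vk + 2 * f k) / 3) j

/-- the sat witness point. -/
lemma sat_point {n p : ℕ} (hn : 1 ≤ n) {A : Matrix (Fin p) (Fin n) ℤ} {a : Fin p → ℤ}
    (h3 : Is3CNF A a) (hsat : SatAssign A a) (M : ℝ) :
    ∃ r ∈ FP A a, PObj n M r = -1 := by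
  obtain ⟨μ, hμ01, hμsat⟩ := hsat
  set f : ℕ → ℝ := fun j => if h : j < n then ((μ ⟨j, h⟩ : ℤ) : ℝ) else 0 with hfdef
  have hf01 : ∀ j, f j = 0 ∨ f j = 1 := by
    intro j
    by_cases h : j < n
    · rcases hμ01 ⟨j, h⟩ with h1 | h1
      · left; simp only [hfdef]; rw [dif_pos h, h1]; norm_num
      · right; simp only [hfdef]; rw [dif_pos h, h1]; norm_num
    · left; simp only [hfdef]; rw [dif_neg h]
  have hv : ∀ j, 0 ≤ vseq f j ∧ vseq f j ≤ 1 := by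
    intro j
    induction j with
    | zero => constructor <;> norm_num [vseq]
    | succ k ih =>
      have hstep : vseq f (k+1) = (vseq f k + 2 * f k) / 3 := rfl
      rcases hf01 k with h | h <;> rw [hstep, h] <;> constructor <;> linarith [ih.1, ih.2]
  have hgam : ∀ j, gam (vseq f (j+1)) = f j := by
    intro j
    have hstep : vseq f (j+1) = (vseq f j + 2 * f j) / 3 := rfl
    rcases hf01 j with h | h
    · rw [hstep, h, gam_low (by linarith [(hv j).2])]
    · rw [hstep, h, gam_high (by linarith [(hv j).1])]
  set θ1 : ℝ := (vseq f n + 2) / 3 with hθ1def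
  have hθ23 : 2/3 ≤ θ1 := by rw [hθ1def]; linarith [(hv n).1]
  have hθ1le : θ1 ≤ 1 := by rw [hθ1def]; linarith [(hv n).2]
  set w1 : Fin (n+1) → ℝ := fun k => if (k:ℕ) = n then θ1 else vseq f ((k:ℕ) + 1) with hw1def
  have hw10 : ∀ k, 0 ≤ w1 k := by
    intro k; simp only [hw1def]
    by_cases h : (k:ℕ) = n
    · rw [if_pos h]; linarith
    · rw [if_neg h]; exact (hv _).1
  have hw11 : ∀ k, w1 k ≤ 1 := by
    intro k; simp only [hw1def]
    by_cases h : (k:ℕ) = n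
    · rw [if_pos h]; exact hθ1le
    · rw [if_neg h]; exact (hv _).2
  have hwtop : ∀ k : Fin (n+1), (k:ℕ) = n + 1 - 1 → w1 k = θ1 := by
    intro k hk; simp only [hw1def]; rw [if_pos (by omega)]
  have hwrec : ∀ i : Fin (n+1), 1 ≤ (i:ℕ) →
      w1 ⟨(i:ℕ) - 1, Nat.lt_of_le_of_lt (Nat.sub_le _ _) i.isLt⟩ =
        3 * w1 i - 2 * gam (w1 i) := by
    intro i hi
    have hne : (i:ℕ) - 1 ≠ n := by have := i.isLt; omega
    have hidx : (i:ℕ) - 1 + 1 = (i:ℕ) := by omega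
    have hl : w1 ⟨(i:ℕ) - 1, Nat.lt_of_le_of_lt (Nat.sub_le _ _) i.isLt⟩ = vseq f (i:ℕ) := by
      simp only [hw1def]; rw [if_neg hne, hidx]
    rw [hl]
    by_cases h : (i:ℕ) = n
    · have hwi : w1 i = θ1 := by simp only [hw1def]; rw [if_pos h]
      rw [hwi, gam_high hθ23, hθ1def, h]
      ring
    · have hwi : w1 i = vseq f ((i:ℕ) + 1) := by simp only [hw1def]; rw [if_neg h]
      rw [hwi, hgam (i:ℕ)]
      have hstep : vseq f ((i:ℕ)+1) = (vseq f (i:ℕ) + 2 * f (i:ℕ)) / 3 := rfl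
      rw [hstep]; ring
  have hflex : greedy w1 ∈ Flex (n+1) θ1 := greedy_mem_flex _ _ hw10 hw11 hwtop hwrec
  have hzlast : Tz (greedy w1) (Fin.last n) = 1 := by
    rw [Tz_greedy]
    have : w1 (Fin.last n) = θ1 := by simp only [hw1def]; rw [if_pos (Fin.val_last n)]
    rw [this, gam_high hθ23]
  have hzcs : ∀ i : Fin n, Tz (greedy w1) i.castSucc = ((μ i : ℤ) : ℝ) := by
    intro i
    rw [Tz_greedy]
    have h1 : w1 i.castSucc = vseq f ((i:ℕ) + 1) := by
      simp only [hw1def]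
      rw [if_neg (by rw [Fin.coe_castSucc]; exact Nat.ne_of_lt i.isLt), Fin.coe_castSucc]
    rw [h1, hgam (i:ℕ)]
    simp only [hfdef]
    rw [dif_pos i.isLt]
  have hfcs : ∀ i : Fin n, Tf (greedy w1) i.castSucc = 1/2 := by
    intro i
    rw [Tf_greedy]
    have h1 : w1 i.castSucc = vseq f ((i:ℕ) + 1) := by
      simp only [hw1def]
      rw [if_neg (by rw [Fin.coe_castSucc]; exact Nat.ne_of_lt i.isLt), Fin.coe_castSucc]
    rw [h1, hgam (i:ℕ)]
    rcases hf01 (i:ℕ) with h | h <;> rw [h] <;> norm_num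
  have hFL : ((greedy w1, 0) : Tup (n+1) × ℝ) ∈ FL A a θ1 := by
    refine ⟨⟨fun j => ?_, fun i => ?_⟩, le_refl 0, zero_le_one, hflex⟩
    · have hsum : ∑ i, (A j i : ℝ) * Tz (greedy w1) i.castSucc
          = ∑ i, (A j i : ℝ) * ((μ i : ℤ) : ℝ) :=
        Finset.sum_congr rfl fun i _ => by rw [hzcs i]
      have hcast : (1 : ℝ) - (a j : ℝ) ≤ ∑ i, (A j i : ℝ) * ((μ i : ℤ) : ℝ) := by
        exact_mod_cast hμsat j
      rw [hsum, hzlast]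
      linarith
    · rw [hzcs i, hzlast]
      rcases hμ01 i with h | h <;> rw [h] <;> norm_num
  refine ⟨(θ1, (greedy w1, 0)), ?_, ?_⟩
  · exact ⟨hFL, fun y hy => greedy_opt _ _ hwtop hwrec y.1 hy.2.2.2⟩
  · rw [pobj_expand hn M _]
    simp only
    rw [hzlast]
    have hS : ∑ i : Fin n, Tf (greedy w1) i.castSucc = (n : ℝ) / 2 := by
      rw [Finset.sum_congr rfl fun i _ => hfcs i, Finset.sum_const, Finset.card_univ,
        Fintype.card_fin, nsmul_eq_mul]
      ring
    rw [hS]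
    have hnne : (n:ℝ) ≠ 0 := by
      have : (0:ℝ) < n := by exact_mod_cast hn
      linarith
    field_simp
    ring
/-- for every 3CNF system `(A, a)` over `n ≥ 1` variables there is `M0 > 0`
such that for every `M ≥ M0`: if `(A, a)` is satisfiable then `v(P(A, a, M)) = −1`, and
otherwise `v(P(A, a, M)) = 0`; in both cases the infimum is attained. -/
theorem stmt12 (n p : ℕ) (hn : 1 ≤ n)
    (A : Matrix (Fin p) (Fin n) ℤ) (a : Fin p → ℤ) (h3 : Is3CNF A a) :
    ∃ M0 : ℝ, 0 < M0 ∧ ∀ M : ℝ, M0 ≤ M →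
      (SatAssign A a → IsLeast (PObj n M '' FP A a) (-1)) ∧
      (¬SatAssign A a → IsLeast (PObj n M '' FP A a) 0) := by
  refine ⟨4 * n + 2, by positivity, fun M hM => ⟨fun hsat => ?_, fun hns => ?_⟩⟩
  · obtain ⟨r, hr, hval⟩ := sat_point hn h3 hsat M
    refine ⟨⟨r, hr, hval⟩, ?_⟩
    rintro y ⟨r', hr', rfl⟩
    exact lb_sat hn M hM r' hr'
  · obtain ⟨r, hr, hval⟩ := unsat_point hn h3 M
    refine ⟨⟨r, hr, hval⟩, ?_⟩
    rintro y ⟨r', hr', rfl⟩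
    exact lb_unsat hn h3 hns M hM r' hr'
end
end

section
/- Let (A, a) be a 3CNF system over n ≥ 1 variables and let 𝔽 = {(θ, z, f, s, t, u, e) ∈ ℝ × (ℝ^{n+1})^5 × ℝ : (z, f, s, t, u, e) is an optimal solution of L(θ)} be the feasible set of P(A, a, M) (which does not depend on M). If Q_1, …, Q_q are polyhedra (finite intersections of closed half-spaces in ℝ^{5(n+1)+2}) with 𝔽 = Q_1 ∪ ⋯ ∪ Q_q, then q ≥ 2^n. -/
noncomputable section

/-- A polyhedron: a finite intersection of closed half-spaces. -/
def IsPolyhedron {E : Type} [AddCommGroup E] [Module ℝ E] (Q : Set E) : Prop :=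
  ∃ (k : ℕ) (φ : Fin k → E →ₗ[ℝ] ℝ) (c : Fin k → ℝ), Q = {x | ∀ i, φ i x ≤ c i}

namespace S13

open Finset

/-- bit sequence: bits of the assignment, extended by `1` from index `n` on. -/
def bit (n : ℕ) (v : Fin n → Bool) (i : ℕ) : ℝ :=
  if h : i < n then (if v ⟨i, h⟩ then 1 else 0) else 1

lemma bit_cases (n : ℕ) (v : Fin n → Bool) (i : ℕ) :
    bit n v i = 0 ∨ bit n v i = 1 := by
  unfold bit
  split
  · split
    · exact Or.inr rfl
    · exact Or.inl rfl
  · exact Or.inr rfl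

lemma bit_nonneg (n : ℕ) (v : Fin n → Bool) (i : ℕ) : 0 ≤ bit n v i := by
  rcases bit_cases n v i with h | h <;> rw [h] <;> norm_num

lemma bit_le_one (n : ℕ) (v : Fin n → Bool) (i : ℕ) : bit n v i ≤ 1 := by
  rcases bit_cases n v i with h | h <;> rw [h] <;> norm_num

lemma bit_last (n : ℕ) (v : Fin n → Bool) : bit n v n = 1 :=
  dif_neg (lt_irrefl n)

/-- the `u`-trajectory of the optimal solution. -/
def uu (n : ℕ) (v : Fin n → Bool) : ℕ → ℝ
  | 0 => bit n v 0
  | i + 1 => (uu n v i + 2 * bit n v (i + 1)) / 3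

lemma uu_bounds (n : ℕ) (v : Fin n → Bool) (i : ℕ) :
    0 ≤ uu n v i ∧ uu n v i ≤ 1 := by
  induction i with
  | zero =>
    exact ⟨bit_nonneg n v 0, bit_le_one n v 0⟩
  | succ i ih =>
    have h0 := bit_nonneg n v (i + 1)
    have h1 := bit_le_one n v (i + 1)
    constructor <;> simp only [uu] <;> [linarith [ih.1]; linarith [ih.2]]

lemma uu_of_bit0 (n : ℕ) (v : Fin n → Bool) (i : ℕ) (h : bit n v i = 0) :
    uu n v i ≤ 1 / 3 := by
  cases i with
  | zero => norm_num [uu, h]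
  | succ m => have := (uu_bounds n v m).2; simp only [uu, h]; linarith

lemma uu_of_bit1 (n : ℕ) (v : Fin n → Bool) (i : ℕ) (h : bit n v i = 1) :
    2 / 3 ≤ uu n v i := by
  cases i with
  | zero => norm_num [uu, h]
  | succ m => have := (uu_bounds n v m).1; simp only [uu, h]; linarith

/-- chain multipliers -/
def al (n : ℕ) (v : Fin n → Bool) : ℕ → ℝ
  | 0 => 0
  | i + 1 => 3 * al n v i + 3 * 16 ^ (i + 1) * bit n v i

lemma al_nonneg (n : ℕ) (v : Fin n → Bool) (i : ℕ) : 0 ≤ al n v i := by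
  induction i with
  | zero => simp [al]
  | succ i ih =>
    have h0 := bit_nonneg n v i
    have h1 : (0:ℝ) ≤ 16 ^ (i+1) := by positivity
    simp only [al]; nlinarith

lemma al_le (n : ℕ) (v : Fin n → Bool) (i : ℕ) :
    al n v i ≤ 48 / 13 * (16 ^ i - 3 ^ i) := by
  induction i with
  | zero => simp [al]
  | succ i ih =>
    have h1 := bit_le_one n v i
    have h0 := bit_nonneg n v i
    have hp : (0:ℝ) < 16 ^ (i+1) := by positivity
    have hb : 3 * (16:ℝ) ^ (i + 1) * bit n v i ≤ 3 * 16 ^ (i+1) := by nlinarith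
    simp only [al]
    have e1 : (16:ℝ) ^ (i+1) = 16 * 16 ^ i := by ring
    have e2 : (3:ℝ) ^ (i+1) = 3 * 3 ^ i := by ring
    rw [e1, e2]
    nlinarith

lemma num1 (n : ℕ) (v : Fin n → Bool) (j : ℕ) :
    2 * (1/4 : ℝ) ^ (n - j) + 4 * al n v j ≤ 16 ^ (j + 1) := by
  have h1 := al_le n v j
  have hw : (1/4 : ℝ) ^ (n - j) ≤ 1 := pow_le_one₀ (by norm_num) (by norm_num)
  have h16 : (1:ℝ) ≤ 16 ^ j := one_le_pow₀ (by norm_num)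
  have h3 : (1:ℝ) ≤ 3 ^ j := one_le_pow₀ (by norm_num)
  have e1 : (16:ℝ) ^ (j+1) = 16 * 16 ^ j := by ring
  rw [e1]; nlinarith

lemma num2 (n : ℕ) (v : Fin n → Bool) (j : ℕ) :
    (1/4 : ℝ) ^ (n - j) ≤ 16 ^ (j + 1) / 2 + 2 * al n v j := by
  have hw : (1/4 : ℝ) ^ (n - j) ≤ 1 := pow_le_one₀ (by norm_num) (by norm_num)
  have h16 : (1:ℝ) ≤ 16 ^ j := one_le_pow₀ (by norm_num)
  have e1 : (16:ℝ) ^ (j+1) = 16 * 16 ^ j := by ring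
  have := al_nonneg n v j
  rw [e1]; nlinarith

/-- the per-level certificate inequality -/
lemma level {W w a s t z f u U b : ℝ}
    (hb : b = 0 ∨ b = 1)
    (hW : 0 ≤ W) (hw : 0 ≤ w) (ha : 0 ≤ a)
    (h1 : 2 * w + 4 * a ≤ W) (h2 : w ≤ W / 2 + 2 * a)
    (hs : 3/2 * u - 1/2 ≤ s) (ht : 3/2 * u - 1 ≤ t)
    (hz : z = 2 * (s - t))
    (hf1 : z - 1/2 ≤ f) (hf2 : 1/2 - z ≤ f)
    (hz0 : 0 ≤ z) (hz1 : z ≤ 1) (ht0 : 0 ≤ t) :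
    (3 * a + 3 * W * b) * (u - U) ≤
      W * ((s + t) - b * (3 * U - 3/2)) + w * (f - 1/2)
        + a * ((3 * u - 2 * z) - (3 * U - 2 * b)) := by
  rcases hb with rfl | rfl
  · have p1 : 0 ≤ W * (s + t - z/2) := mul_nonneg hW (by linarith)
    have p2 : 0 ≤ w * (f - 1/2 + z) := mul_nonneg hw (by linarith)
    have p3 : 0 ≤ z * (W/2 - w - 2*a) := mul_nonneg hz0 (by linarith)
    nlinarith [p1, p2, p3]
  · have p1 : 0 ≤ W * (s + t - 3*u + 1 + z/2) := mul_nonneg hW (by linarith)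
    have p2 : 0 ≤ w * (f - z + 1/2) := mul_nonneg hw (by linarith)
    have p3 : 0 ≤ (1 - z) * (W/2 - w + 2*a) :=
      mul_nonneg (by linarith) (by linarith)
    nlinarith [p1, p2, p3]

end S13

namespace S13

open Finset

/-- the candidate optimal tuple for assignment `v`. -/
def X (n : ℕ) (v : Fin n → Bool) : Tup (n + 1) :=
  (fun i => bit n v i.val,
   fun _ => 1/2,
   fun i => bit n v i.val * (3/2 * uu n v i.val - 1/2),
   fun i => bit n v i.val * (3/2 * uu n v i.val - 1),
   fun i => uu n v i.val)

@[simp] lemma X_z (n v i) : Tz (X n v) i = bit n v i.val := rfl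
@[simp] lemma X_f (n v i) : Tf (X n v) i = 1/2 := rfl
@[simp] lemma X_s (n v i) : Ts (X n v) i = bit n v i.val * (3/2 * uu n v i.val - 1/2) := rfl
@[simp] lemma X_t (n v i) : Tt (X n v) i = bit n v i.val * (3/2 * uu n v i.val - 1) := rfl
@[simp] lemma X_u (n v i) : Tu (X n v) i = uu n v i.val := rfl

/-- extend a `Fin (n+1)`-indexed family to `ℕ`. -/
def ex (n : ℕ) (g : Fin (n + 1) → ℝ) (j : ℕ) : ℝ :=
  if h : j < n + 1 then g ⟨j, h⟩ else 0

lemma ex_eq (n : ℕ) (g : Fin (n + 1) → ℝ) (j : ℕ) (h : j < n + 1) :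
    ex n g j = g ⟨j, h⟩ := dif_pos h

lemma ex_fin (n : ℕ) (g : Fin (n + 1) → ℝ) (i : Fin (n + 1)) :
    ex n g i.val = g i := by rw [ex_eq n g i.val i.isLt]

lemma X_mem_flex (n : ℕ) (v : Fin n → Bool) :
    X n v ∈ Flex (n + 1) (uu n v n) := by
  refine ⟨?_, ?_, ?_⟩
  · intro i hi
    have : i.val = n := by omega
    simp [this]
  · intro i
    have hu0 := (uu_bounds n v i.val).1
    have hu1 := (uu_bounds n v i.val).2
    rcases bit_cases n v i.val with hb | hb
    · have hlow := uu_of_bit0 n v i.val hb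
      refine ⟨?_,?_,?_,?_,?_,?_,?_,?_,?_,?_,?_,?_,?_,?_,?_⟩ <;>
        simp only [X_z, X_f, X_s, X_t, X_u, hb] <;> try norm_num
      all_goals linarith
    · have hhigh := uu_of_bit1 n v i.val hb
      refine ⟨?_,?_,?_,?_,?_,?_,?_,?_,?_,?_,?_,?_,?_,?_,?_⟩ <;>
        simp only [X_z, X_f, X_s, X_t, X_u, hb] <;> try norm_num
      all_goals linarith
  · intro i hi
    obtain ⟨m, hm⟩ : ∃ m, i.val = m + 1 := ⟨i.val - 1, by omega⟩
    simp only [X_u, X_z, hm]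
    have : m + 1 - 1 = m := rfl
    rw [this]
    show uu n v m = 3 * uu n v (m + 1) - 2 * bit n v (m + 1)
    simp only [uu]; ring

/-- The main certificate induction. -/
lemma claim (n : ℕ) (v : Fin n → Bool) (p : Tup (n + 1))
    (hp : p ∈ Flex (n + 1) (uu n v n)) :
    ∀ i, i ≤ n → al n v (i + 1) * (ex n (Tu p) i - uu n v i) ≤
      ∑ j ∈ Finset.range (i + 1),
        ((16:ℝ) ^ (j + 1) * ((ex n (Ts p) j + ex n (Tt p) j)
            - bit n v j * (3 * uu n v j - 3/2))
          + (1/4 : ℝ) ^ (n - j) * (ex n (Tf p) j - 1/2)) := by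
  have hlevel : ∀ j : ℕ, (hj : j < n + 1) →
      (3 * al n v j + 3 * (16:ℝ) ^ (j+1) * bit n v j) * (ex n (Tu p) j - uu n v j) ≤
        ((16:ℝ) ^ (j + 1) * ((ex n (Ts p) j + ex n (Tt p) j)
            - bit n v j * (3 * uu n v j - 3/2))
          + (1/4 : ℝ) ^ (n - j) * (ex n (Tf p) j - 1/2))
        + al n v j * ((3 * ex n (Tu p) j - 2 * ex n (Tz p) j)
            - (3 * uu n v j - 2 * bit n v j)) := by
    intro j hj
    obtain ⟨c1, c2, c3, c4, c5, c6, c7, c8, c9, c10, c11, c12, c13, c14, c15⟩ :=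
      hp.2.1 ⟨j, hj⟩
    rw [ex_eq n _ j hj, ex_eq n _ j hj, ex_eq n _ j hj, ex_eq n _ j hj,
        ex_eq n _ j hj]
    have hb := bit_cases n v j
    have hW : (0:ℝ) ≤ 16 ^ (j+1) := by positivity
    have hw : (0:ℝ) ≤ (1/4:ℝ) ^ (n - j) := by positivity
    have ha := al_nonneg n v j
    have h1 := num1 n v j
    have h2 := num2 n v j
    have hhalf : bit n v j * (3 * uu n v j - 3/2) =
        bit n v j * (3/2 * uu n v j - 1/2) + bit n v j * (3/2 * uu n v j - 1) := by
      ring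
    have := level (W := (16:ℝ)^(j+1)) (w := (1/4:ℝ)^(n-j)) (a := al n v j)
      (s := Ts p ⟨j, hj⟩) (t := Tt p ⟨j, hj⟩) (z := Tz p ⟨j, hj⟩)
      (f := Tf p ⟨j, hj⟩) (u := Tu p ⟨j, hj⟩) (U := uu n v j)
      (b := bit n v j) hb hW hw ha (by linarith) (by linarith)
      c1 c2 c3 c5 (by linarith) c6 c7 c12
    linarith
  intro i
  induction i with
  | zero =>
    intro _
    rw [Finset.sum_range_one]
    have h0 := hlevel 0 (by omega)
    have hal : al n v 1 = 3 * al n v 0 + 3 * (16:ℝ)^(0+1) * bit n v 0 := rfl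
    have hz : al n v 0 = 0 := rfl
    rw [hal, hz]
    have := h0
    rw [hz] at this
    linarith
  | succ i ih =>
    intro hi
    have ih' := ih (by omega)
    rw [Finset.sum_range_succ]
    have hlev := hlevel (i + 1) (by omega)
    -- chain equality for p
    have hchain : ex n (Tu p) i = 3 * ex n (Tu p) (i+1) - 2 * ex n (Tz p) (i+1) := by
      have h := hp.2.2 ⟨i + 1, by omega⟩ (by simp)
      rw [ex_eq n _ i (by omega), ex_eq n _ (i+1) (by omega), ex_eq n _ (i+1) (by omega)]
      convert h using 2
      exact Fin.ext (by simp)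
    have huchain : uu n v i = 3 * uu n v (i+1) - 2 * bit n v (i+1) := by
      simp only [uu]; ring
    have hal : al n v (i+2) = 3 * al n v (i+1) + 3 * (16:ℝ)^(i+1+1) * bit n v (i+1) := rfl
    rw [hal]
    rw [hchain, huchain] at ih'
    linarith [ih', hlev]
  done

end S13

namespace S13

open Finset

lemma sum_fin_to_range (n : ℕ) (g : Fin (n + 1) → ℝ) (c : ℕ → ℝ) :
    ∑ i : Fin (n + 1), c i.val * g i = ∑ j ∈ Finset.range (n + 1), c j * ex n g j := by
  rw [← Fin.sum_univ_eq_sum_range (fun j => c j * ex n g j)]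
  exact Finset.sum_congr rfl fun i _ => by rw [ex_fin]

/-- optimality of `X n v` over `Flex (n+1) (uu n v n)`. -/
lemma X_opt (n : ℕ) (v : Fin n → Bool) (p : Tup (n + 1))
    (hp : p ∈ Flex (n + 1) (uu n v n)) :
    wObj (n + 1) 1 (X n v) ≤ wObj (n + 1) 1 p := by
  have key := claim n v p hp n le_rfl
  -- the multiplier term vanishes
  have htop : ex n (Tu p) n = uu n v n := by
    rw [ex_eq n _ n (by omega)]
    exact hp.1 ⟨n, by omega⟩ (by simp)
  rw [htop, sub_self, mul_zero] at key
  -- split the sum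
  have hsplit : ∑ j ∈ Finset.range (n + 1),
      ((16:ℝ) ^ (j + 1) * ((ex n (Ts p) j + ex n (Tt p) j)
          - bit n v j * (3 * uu n v j - 3/2))
        + (1/4 : ℝ) ^ (n - j) * (ex n (Tf p) j - 1/2)) =
      (∑ j ∈ Finset.range (n + 1), (16:ℝ) ^ (j + 1) * (ex n (Ts p) j + ex n (Tt p) j)
        - ∑ j ∈ Finset.range (n + 1), (16:ℝ) ^ (j + 1) * (bit n v j * (3 * uu n v j - 3/2)))
      + (∑ j ∈ Finset.range (n + 1), (1/4 : ℝ) ^ (n - j) * ex n (Tf p) j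
        - ∑ j ∈ Finset.range (n + 1), (1/4 : ℝ) ^ (n - j) * (1/2)) := by
    rw [← Finset.sum_sub_distrib, ← Finset.sum_sub_distrib, ← Finset.sum_add_distrib]
    exact Finset.sum_congr rfl fun j _ => by ring
  rw [hsplit] at key
  unfold wObj
  have e1 : ∑ i : Fin (n + 1), (16:ℝ) ^ (i.val + 1) * (Ts p i + Tt p i)
      = ∑ j ∈ Finset.range (n + 1), (16:ℝ) ^ (j + 1) * (ex n (Ts p) j + ex n (Tt p) j) := by
    rw [← Fin.sum_univ_eq_sum_range
      (fun j => (16:ℝ) ^ (j + 1) * (ex n (Ts p) j + ex n (Tt p) j))]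
    exact Finset.sum_congr rfl fun i _ => by rw [ex_fin, ex_fin]
  have e2 : ∑ i : Fin (n + 1), (1/4:ℝ) ^ (n + 1 - 1 - i.val) * Tf p i
      = ∑ j ∈ Finset.range (n + 1), (1/4 : ℝ) ^ (n - j) * ex n (Tf p) j := by
    rw [← Fin.sum_univ_eq_sum_range (fun j => (1/4:ℝ) ^ (n - j) * ex n (Tf p) j)]
    exact Finset.sum_congr rfl fun i _ => by rw [ex_fin]; norm_num
  have e3 : ∑ i : Fin (n + 1), (16:ℝ) ^ (i.val + 1) * (Ts (X n v) i + Tt (X n v) i)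
      = ∑ j ∈ Finset.range (n + 1), (16:ℝ) ^ (j + 1) * (bit n v j * (3 * uu n v j - 3/2)) := by
    rw [← Fin.sum_univ_eq_sum_range
      (fun j => (16:ℝ) ^ (j + 1) * (bit n v j * (3 * uu n v j - 3/2)))]
    exact Finset.sum_congr rfl fun i _ => by
      simp only [X_s, X_t]; ring
  have e4 : ∑ i : Fin (n + 1), (1/4:ℝ) ^ (n + 1 - 1 - i.val) * Tf (X n v) i
      = ∑ j ∈ Finset.range (n + 1), (1/4 : ℝ) ^ (n - j) * (1/2 : ℝ) := by
    rw [← Fin.sum_univ_eq_sum_range (fun j => (1/4:ℝ) ^ (n - j) * (1/2:ℝ))]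
    exact Finset.sum_congr rfl fun i _ => by simp only [X_f]; norm_num
  rw [e1, e2, e3, e4] at *
  linarith [key]

/-- `(1/4)^(m-1-i)` version matching `wObj` is handled above; now feasibility. -/
lemma X_relax {n p' : ℕ} (A : Matrix (Fin p') (Fin n) ℤ) (a : Fin p' → ℤ)
    (h3 : Is3CNF A a) (v : Fin n → Bool) :
    BzRelax A a (Tz (X n v)) 1 := by
  obtain ⟨P, N, hP, hN, hA, ha, -⟩ := h3
  have hzlast : Tz (X n v) (Fin.last n) = 1 := by
    simp only [X_z]
    exact bit_last n v
  constructor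
  · intro j
    rw [hzlast]
    have hterm : ∀ i : Fin n, (-(N j i) : ℝ) ≤ (A j i : ℝ) * Tz (X n v) i.castSucc := by
      intro i
      have hAji : A j i = P j i - N j i := by rw [hA]; simp [Matrix.sub_apply]
      have hz0 : (0:ℝ) ≤ Tz (X n v) i.castSucc := by simp only [X_z]; exact bit_nonneg n v _
      have hz1 : Tz (X n v) i.castSucc ≤ 1 := by simp only [X_z]; exact bit_le_one n v _
      have hPr : (0:ℝ) ≤ (P j i : ℝ) := by exact_mod_cast hP j i
      have hNr : (0:ℝ) ≤ (N j i : ℝ) := by exact_mod_cast hN j i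
      rw [hAji]
      push_cast
      nlinarith
    have hsum := Finset.sum_le_sum (s := Finset.univ) (fun i _ => hterm i)
    have haj : ∑ i : Fin n, (-(N j i) : ℝ) = -(a j : ℝ) := by
      rw [ha j]; push_cast; rw [Finset.sum_neg_distrib]
    rw [haj] at hsum
    linarith
  · intro i
    rw [hzlast]
    have hz0 : (0:ℝ) ≤ Tz (X n v) i.castSucc := by simp only [X_z]; exact bit_nonneg n v _
    have hz1 : Tz (X n v) i.castSucc ≤ 1 := by simp only [X_z]; exact bit_le_one n v _
    constructor <;> linarith

/-- the candidate point of `FP`. -/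
def Pt (n : ℕ) (v : Fin n → Bool) : ℝ × Tup (n + 1) × ℝ :=
  (uu n v n, (X n v, 1))

lemma Pt_mem_FP {n p' : ℕ} (A : Matrix (Fin p') (Fin n) ℤ) (a : Fin p' → ℤ)
    (h3 : Is3CNF A a) (v : Fin n → Bool) :
    Pt n v ∈ FP A a := by
  refine ⟨⟨X_relax A a h3 v, by norm_num [Pt], by norm_num [Pt], X_mem_flex n v⟩, ?_⟩
  intro y hy
  exact X_opt n v y.1 hy.2.2.2

end S13

namespace S13

open Finset

lemma poly_convex {E : Type} [AddCommGroup E] [Module ℝ E] {Q : Set E}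
    (h : IsPolyhedron Q) {x y : E} (hx : x ∈ Q) (hy : y ∈ Q)
    {r s : ℝ} (hr : 0 ≤ r) (hs : 0 ≤ s) (hrs : r + s = 1) : r • x + s • y ∈ Q := by
  obtain ⟨k, φ, c, rfl⟩ := h
  intro i
  have hxi := hx i
  have hyi := hy i
  simp only [Set.mem_setOf_eq] at *
  rw [map_add, map_smul, map_smul, smul_eq_mul, smul_eq_mul]
  have hr1 : r = 1 - s := by linarith
  subst hr1
  have p1 := mul_le_mul_of_nonneg_left hxi hr
  have p2 := mul_le_mul_of_nonneg_left hyi hs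
  nlinarith [p1, p2]

lemma no_mid {n p' : ℕ} (A : Matrix (Fin p') (Fin n) ℤ) (a : Fin p' → ℤ)
    (v w : Fin n → Bool) (k : Fin n) (hvk : v k = true) (hwk : w k = false) :
    ((3/4 : ℝ) • Pt n v + (1/4 : ℝ) • Pt n w) ∉ FP A a := by
  intro hc
  set c : ℝ × Tup (n + 1) × ℝ := (3/4 : ℝ) • Pt n v + (1/4 : ℝ) • Pt n w with hcdef
  obtain ⟨hfeas, hmin⟩ := hc
  set K : Fin (n + 1) := k.castSucc with hKdef
  have hKval : K.val = k.val := rfl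
  have hkn : k.val < n := k.isLt
  -- the z and f values of c at K
  have hzK : Tz c.2.1 K = 3/4 := by
    have h1 : bit n v k.val = 1 := by
      unfold bit; rw [dif_pos hkn]; simp [Fin.eta, hvk]
    have h2 : bit n w k.val = 0 := by
      unfold bit; rw [dif_pos hkn]; simp [Fin.eta, hwk]
    simp only [hcdef, Pt, Tz, Prod.smul_fst, Prod.smul_snd, Prod.fst_add, Prod.snd_add,
      Pi.add_apply, Pi.smul_apply, smul_eq_mul, X]
    rw [hKval, h1, h2]; norm_num
  have hfK : Tf c.2.1 K = 1/2 := by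
    simp only [hcdef, Pt, Tf, Prod.smul_fst, Prod.smul_snd, Prod.fst_add, Prod.snd_add,
      Pi.add_apply, Pi.smul_apply, smul_eq_mul, X]
    norm_num
  -- the improved point y
  set y : Tup (n + 1) × ℝ :=
    ((Tz c.2.1, Function.update (Tf c.2.1) K (1/4), Ts c.2.1, Tt c.2.1, Tu c.2.1),
      c.2.2) with hydef
  have hyz : Tz y.1 = Tz c.2.1 := rfl
  have hyf : Tf y.1 = Function.update (Tf c.2.1) K (1/4) := rfl
  have hys : Ts y.1 = Ts c.2.1 := rfl
  have hyt : Tt y.1 = Tt c.2.1 := rfl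
  have hyu : Tu y.1 = Tu c.2.1 := rfl
  obtain ⟨hB, he0, he1, hF⟩ := hfeas
  have hyFL : y ∈ FL A a c.1 := by
    refine ⟨hB, he0, he1, ?_, ?_, ?_⟩
    · intro i hi
      exact hF.1 i hi
    · intro i
      by_cases hi : i = K
      · rw [hi]
        obtain ⟨d1, d2, d3, d4, d5, d6, d7, d8, d9, d10, d11, d12, d13, d14, d15⟩ :=
          hF.2.1 K
        have hfy : Tf y.1 K = 1/4 := by rw [hyf]; exact Function.update_self _ _ _
        rw [hyz, hys, hyt, hyu, hfy, hzK]
        exact ⟨d1, d2, by rw [← hzK]; exact d3, by norm_num, by norm_num, by norm_num,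
          by norm_num, by norm_num, by norm_num, d10, d11, d12, d13, d14, d15⟩
      · obtain ⟨d1, d2, d3, d4, d5, d6, d7, d8, d9, d10, d11, d12, d13, d14, d15⟩ :=
          hF.2.1 i
        have hfy : Tf y.1 i = Tf c.2.1 i := by
          rw [hyf]; exact Function.update_of_ne hi _ _
        rw [hyz, hys, hyt, hyu, hfy]
        exact ⟨d1, d2, d3, d4, d5, d6, d7, d8, d9, d10, d11, d12, d13, d14, d15⟩
    · intro i hi
      exact hF.2.2 i hi
  -- y is strictly better
  have hlt : wObj (n + 1) 1 y.1 < wObj (n + 1) 1 c.2.1 := by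
    unfold wObj
    have hst : ∑ i : Fin (n + 1), (16:ℝ) ^ (i.val + 1) * (Ts y.1 i + Tt y.1 i)
        = ∑ i : Fin (n + 1), (16:ℝ) ^ (i.val + 1) * (Ts c.2.1 i + Tt c.2.1 i) := rfl
    have hfs : ∑ i : Fin (n + 1), (1/4:ℝ) ^ (n + 1 - 1 - i.val) * Tf y.1 i
        < ∑ i : Fin (n + 1), (1/4:ℝ) ^ (n + 1 - 1 - i.val) * Tf c.2.1 i := by
      apply Finset.sum_lt_sum
      · intro i _
        by_cases hi : i = K
        · rw [hi]
          have hfy : Tf y.1 K = 1/4 := by rw [hyf]; exact Function.update_self _ _ _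
          rw [hfy, hfK]
          have : (0:ℝ) < (1/4:ℝ) ^ (n + 1 - 1 - K.val) := by positivity
          nlinarith
        · have hfy : Tf y.1 i = Tf c.2.1 i := by
            rw [hyf]; exact Function.update_of_ne hi _ _
          rw [hfy]
      · refine ⟨K, Finset.mem_univ K, ?_⟩
        have hfy : Tf y.1 K = 1/4 := by rw [hyf]; exact Function.update_self _ _ _
        rw [hfy, hfK]
        have : (0:ℝ) < (1/4:ℝ) ^ (n + 1 - 1 - K.val) := by positivity
        nlinarith
    rw [hst]
    linarith
  have := hmin y hyFL
  linarith

end S13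


/-- if the feasible set `𝔽` of `P(A, a, M)` is covered by polyhedra
`Q_1, …, Q_q`, then `q ≥ 2^n`. -/
theorem stmt13 (n p : ℕ) (hn : 1 ≤ n)
    (A : Matrix (Fin p) (Fin n) ℤ) (a : Fin p → ℤ) (h3 : Is3CNF A a)
    (q : ℕ) (Q : Fin q → Set (ℝ × Tup (n + 1) × ℝ))
    (hpoly : ∀ j, IsPolyhedron (Q j))
    (hcover : FP A a = ⋃ j, Q j) :
    2 ^ n ≤ q := by
  classical
  have hmem : ∀ v : Fin n → Bool, S13.Pt n v ∈ FP A a :=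
    fun v => S13.Pt_mem_FP A a h3 v
  have hex : ∀ v : Fin n → Bool, ∃ j, S13.Pt n v ∈ Q j := by
    intro v
    have h := hmem v
    rw [hcover] at h
    exact Set.mem_iUnion.1 h
  choose g hg using hex
  have hinj : Function.Injective g := by
    intro v w hvw
    by_contra hne
    obtain ⟨k, hk⟩ := Function.ne_iff.1 hne
    have hQv := hg v
    have hQw : S13.Pt n w ∈ Q (g v) := by rw [hvw]; exact hg w
    have hsub : Q (g v) ⊆ FP A a := by rw [hcover]; exact Set.subset_iUnion Q (g v)
    cases hv : v k <;> cases hw : w k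
    · exact hk (by rw [hv, hw])
    · exact S13.no_mid A a w v k hw hv
        (hsub (S13.poly_convex (hpoly (g v)) hQw hQv (by norm_num) (by norm_num) (by norm_num)))
    · exact S13.no_mid A a v w k hv hw
        (hsub (S13.poly_convex (hpoly (g v)) hQv hQw (by norm_num) (by norm_num) (by norm_num)))
    · exact hk (by rw [hv, hw])
  calc (2:ℕ) ^ n = Fintype.card (Fin n → Bool) := by simp
    _ ≤ Fintype.card (Fin q) := Fintype.card_le_of_injective g hinj
    _ = q := Fintype.card_fin q
end
end
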